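/- arXiv:1405.3324 — 3 statements merged into one kernel-verified Lean document; each statement's English description precedes it below -/
import Mathlib

section
/- Let F be an algebraically closed field of characteristic 2, let n ≥ 6 be even, let V be an irreducible F S_n-module satisfying d_3(V) > d_1(V), and let X be a subgroup of S_n. Let N := Ker η_{3,1} ⊆ M_3. Suppose that for every nonzero F S_n-module quotient J of N one has J^X ≠ 0, and that additionally dim_F J^X ≥ 2 whenever J^{S_n} ≠ 0. Then the restriction of V to X is a reducible F X-module. -/
open scoped Pointwise

/-- The set of `r`-element subsets of `{1, ..., n}`. -/
abbrev NSub (n r : ℕ) := {s : Finset (Fin n) // s.card = r}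

/-- The symmetric group `Sₙ` acts on `r`-element subsets of `{1, ..., n}`. -/
instance NSub.instMulAction (n r : ℕ) : MulAction (Equiv.Perm (Fin n)) (NSub n r) where
  smul g s := ⟨g • s.1, by rw [Finset.card_smul_finset]; exact s.2⟩
  one_smul s := Subtype.ext (one_smul _ s.1)
  mul_smul g h s := Subtype.ext (mul_smul g h s.1)

/-- The permutation module `M_r` of `Sₙ` on `r`-element subsets of `{1, ..., n}`. -/
abbrev MM (F : Type*) [Field F] (n r : ℕ) : Type _ := NSub n r →₀ F

/-- The representation of `Sₙ` on the permutation module `M_r`. -/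
noncomputable abbrev Mrep (F : Type*) [Field F] (n r : ℕ) :
    Representation F (Equiv.Perm (Fin n)) (MM F n r) where
  toFun g := Finsupp.lmapDomain F F (g • ·)
  map_one' := by ext x y; simp
  map_mul' x y := by ext z w; simp [mul_smul]

/-- The incidence map `η_{r,s} : M_r → M_s`, sending an `r`-subset to the sum of all
`s`-subsets incident with it (i.e. containing it or contained in it). -/
noncomputable def eta (F : Type*) [Field F] (n r s : ℕ) : MM F n r →ₗ[F] MM F n s :=
  Finsupp.lift (MM F n s) F (NSub n r) fun A =>
    ∑ B : NSub n s, if A.1 ⊆ B.1 ∨ B.1 ⊆ A.1 then Finsupp.single B (1 : F) else 0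

/-- A submodule is invariant under a representation. -/
def RepInvariant {F G V : Type*} [Field F] [Monoid G] [AddCommGroup V] [Module F V]
    (ρ : Representation F G V) (p : Submodule F V) : Prop :=
  ∀ g : G, ∀ v ∈ p, ρ g v ∈ p

/-- A representation is irreducible if the space is nonzero and the only invariant
submodules are `⊥` and `⊤`. -/
def RepIrreducible {F G V : Type*} [Field F] [Monoid G] [AddCommGroup V] [Module F V]
    (ρ : Representation F G V) : Prop :=
  Nontrivial V ∧ ∀ p : Submodule F V, RepInvariant ρ p → p = ⊥ ∨ p = ⊤

/-- The space of `G`-equivariant linear maps between two representations. -/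
def EquivariantHom {F G V W : Type*} [Field F] [Monoid G] [AddCommGroup V] [Module F V]
    [AddCommGroup W] [Module F W]
    (ρ₁ : Representation F G V) (ρ₂ : Representation F G W) : Submodule F (V →ₗ[F] W) where
  carrier := {f | ∀ g v, f (ρ₁ g v) = ρ₂ g (f v)}
  add_mem' := by
    intro f h hf hh g v
    simp [hf g v, hh g v]
  zero_mem' := by
    intro g v
    simp
  smul_mem' := by
    intro c f hf g v
    simp [hf g v]

/-- `d_r(V) = dim Hom_{F Sₙ}(M_r, End_F(V))`. -/
noncomputable def dr (F : Type*) [Field F] (n r : ℕ) {V : Type*} [AddCommGroup V] [Module F V]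
    (ρ : Representation F (Equiv.Perm (Fin n)) V) : ℕ :=
  Module.finrank F (EquivariantHom (Mrep F n r) (ρ.linHom ρ))

/-- The quotient representation on `V ⧸ p`, for `p` an invariant submodule. -/
noncomputable def quotRep {F G V : Type*} [Field F] [Group G] [AddCommGroup V] [Module F V]
    (ρ : Representation F G V) (p : Submodule F V) (hp : RepInvariant ρ p) :
    Representation F G (V ⧸ p) where
  toFun g := Submodule.mapQ p p (ρ g) (fun v hv => hp g v hv)
  map_one' := by
    apply Submodule.linearMap_qext
    ext v
    simp [Submodule.mapQ_apply]
  map_mul' g h := by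
    apply Submodule.linearMap_qext
    ext v
    simp [Submodule.mapQ_apply]

/-- The subspace of `X`-fixed points of a representation, for `X` a subgroup. -/
noncomputable def fixedBy {F G V : Type*} [Field F] [Group G] [AddCommGroup V] [Module F V]
    (ρ : Representation F G V) (X : Subgroup G) : Submodule F V :=
  Representation.invariants (MonoidHom.comp ρ X.subtype)

/-- `T_1 ∈ M_1`, the sum of all `1`-element subsets. -/
noncomputable def T1 (F : Type*) [Field F] (n : ℕ) : MM F n 1 :=
  ∑ A : NSub n 1, Finsupp.single A 1

lemma Mrep_T1 (F : Type*) [Field F] (n : ℕ) (g : Equiv.Perm (Fin n)) :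
    Mrep F n 1 g (T1 F n) = T1 F n := by
  unfold T1
  rw [map_sum]
  simp only [MonoidHom.coe_mk, OneHom.coe_mk, Finsupp.lmapDomain_apply, Finsupp.mapDomain_single]
  exact Fintype.sum_equiv (MulAction.toPerm g) _ _ fun A => rfl

lemma spanT1_invariant (F : Type*) [Field F] (n : ℕ) :
    RepInvariant (Mrep F n 1) (Submodule.span F {T1 F n}) := by
  intro g v hv
  rw [Submodule.mem_span_singleton] at hv ⊢
  obtain ⟨c, rfl⟩ := hv
  refine ⟨c, ?_⟩
  rw [map_smul, Mrep_T1]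

/-- The `F Sₙ`-module `Q = M_1 / (F·T_1)`. -/
noncomputable def Qrep (F : Type*) [Field F] (n : ℕ) :
    Representation F (Equiv.Perm (Fin n)) (MM F n 1 ⧸ Submodule.span F {T1 F n}) :=
  quotRep (Mrep F n 1) (Submodule.span F {T1 F n}) (spanT1_invariant F n)

/-- `f_r(X) = dim (M_r)^X`, the number of `X`-orbits on `r`-subsets. -/
noncomputable def fr (F : Type*) [Field F] (n r : ℕ) (X : Subgroup (Equiv.Perm (Fin n))) : ℕ :=
  Module.finrank F (fixedBy (Mrep F n r) X)

/-- The `1`-cocycles of a representation: functions `f : G → V` with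
`f (g h) = f g + g • f h`. -/
noncomputable def oneCocycles' {F G V : Type*} [Field F] [Group G] [AddCommGroup V]
    [Module F V] (ρ : Representation F G V) : Submodule F (G → V) where
  carrier := {f | ∀ g h : G, f (g * h) = f g + ρ g (f h)}
  zero_mem' := by intro g h; simp
  add_mem' := by
    intro f₁ f₂ h₁ h₂ g h
    simp only [Pi.add_apply, map_add, h₁ g h, h₂ g h]
    abel
  smul_mem' := by
    intro c f hf g h
    simp [hf g h, smul_add]

/-- The coboundary map `V → (G → V)`, `v ↦ (g ↦ g • v - v)`. -/
noncomputable def d01 {F G V : Type*} [Field F] [Group G] [AddCommGroup V]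
    [Module F V] (ρ : Representation F G V) : V →ₗ[F] (G → V) where
  toFun v := fun g => ρ g v - v
  map_add' := by
    intro u v
    funext g
    simp only [map_add, Pi.add_apply]
    abel
  map_smul' := by
    intro c v
    funext g
    simp [map_smul, smul_sub]

/-- The dimension of the first group cohomology `H¹(G, V)` of a representation, defined
as `1`-cocycles modulo `1`-coboundaries. -/
noncomputable def H1dim {F G V : Type*} [Field F] [Group G] [AddCommGroup V]
    [Module F V] (ρ : Representation F G V) : ℕ :=
  Module.finrank F
    (↥(oneCocycles' ρ) ⧸ Submodule.comap (oneCocycles' ρ).subtype (LinearMap.range (d01 ρ)))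

/-- `h(X) = dim H¹(X, Q)`. -/
noncomputable def hX (F : Type*) [Field F] (n : ℕ) (X : Subgroup (Equiv.Perm (Fin n))) : ℕ :=
  H1dim ((Qrep F n).comp X.subtype)

/-- The Specht module `S^{(n-2,2)} = Ker η_{2,0} ∩ Ker η_{2,1} ⊆ M_2`. -/
noncomputable def Specht2 (F : Type*) [Field F] (n : ℕ) : Submodule F (MM F n 2) :=
  LinearMap.ker (eta F n 2 0) ⊓ LinearMap.ker (eta F n 2 1)

/-!
Suppose `V` stays irreducible on `X`. The map `η_{3,1}` is onto (`3` is invertible in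
characteristic `2`), so an equivariant `φ : M_3 → End V` vanishing on `N = Ker η_{3,1}` factors
through `M_1`; as `d_3(V) > d_1(V)`, some `φ` does not vanish on `N`. With `K = N ∩ Ker φ`, the map
`φ` embeds `J = N / K` into `End V`. By Schur's lemma for `X` it sends `J^X` into the scalars, so
`dim J^X ≤ 1`; and scalars are `Sₙ`-invariant, so `J^X ⊆ J^{Sₙ}`. Since `J^X ≠ 0`, the hypothesis
then forces `dim J^X ≥ 2`.
-/

section

variable {F G U V W : Type*} [Field F] [AddCommGroup U] [Module F U] [AddCommGroup V] [Module F V]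
  [AddCommGroup W] [Module F W]

section Monoid

variable [Monoid G]

lemma RepInvariant.inf {ρ : Representation F G V} {p q : Submodule F V}
    (hp : RepInvariant ρ p) (hq : RepInvariant ρ q) : RepInvariant ρ (p ⊓ q) :=
  fun g v hv => ⟨hp g v hv.1, hq g v hv.2⟩

lemma repInvariant_ker {ρ : Representation F G V} {σ : Representation F G W} {f : V →ₗ[F] W}
    (hf : f ∈ EquivariantHom ρ σ) : RepInvariant ρ (LinearMap.ker f) := by
  intro g v hv
  rw [LinearMap.mem_ker] at hv ⊢
  rw [hf g v, hv, map_zero]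

lemma RepIrreducible.isIrreducible {ρ : Representation F G V} (h : RepIrreducible ρ) :
    ρ.IsIrreducible where
  exists_pair_ne := by
    have := h.1
    exact ⟨⊥, ⊤, fun e => bot_ne_top (congrArg Subrepresentation.toSubmodule e)⟩
  eq_bot_or_eq_top W :=
    (h.2 W.toSubmodule W.apply_mem_toSubmodule).imp Subrepresentation.ext Subrepresentation.ext

lemma exists_eq_smul_id_of_commute [IsAlgClosed F] [FiniteDimensional F V]
    {ρ : Representation F G V} (h : RepIrreducible ρ) {f : V →ₗ[F] V}
    (hf : ∀ g v, f (ρ g v) = ρ g (f v)) : ∃ c : F, c • LinearMap.id = f := by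
  have := h.isIrreducible
  obtain ⟨c, hc⟩ :=
    (Representation.IsIrreducible.algebraMap_intertwiningMap_bijective_of_isAlgClosed
      (ρ := ρ)).2 ⟨f, fun g => LinearMap.ext (hf g)⟩
  exact ⟨c, congrArg Representation.IntertwiningMap.toLinearMap hc⟩

end Monoid

section Group

variable [Group G]

lemma RepInvariant.map_mkQ {ρ : Representation F G V} {p q : Submodule F V}
    (hp : RepInvariant ρ p) (hq : RepInvariant ρ q) :
    RepInvariant (quotRep ρ p hp) (q.map p.mkQ) := by
  rintro g _ ⟨v, hv, rfl⟩
  exact ⟨ρ g v, hq g v hv, rfl⟩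

lemma liftQ_mem_equivariantHom {ρ : Representation F G V} {σ : Representation F G W}
    {p : Submodule F V} (hp : RepInvariant ρ p) {f : V →ₗ[F] W} (hf : f ∈ EquivariantHom ρ σ)
    (hpf : p ≤ LinearMap.ker f) : p.liftQ f hpf ∈ EquivariantHom (quotRep ρ p hp) σ := by
  intro g v
  induction v using Submodule.Quotient.induction_on with
  | H v => exact hf g v

lemma map_mem_fixedBy {ρ : Representation F G V} {σ : Representation F G W} {f : V →ₗ[F] W}
    (hf : f ∈ EquivariantHom ρ σ) {X : Subgroup G} {v : V} (hv : v ∈ fixedBy ρ X) :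
    f v ∈ fixedBy σ X := fun x => by
  rw [MonoidHom.comp_apply, ← hf, ← MonoidHom.comp_apply, hv x]

lemma smul_id_mem_invariants_linHom (ρ : Representation F G V) (c : F) :
    c • LinearMap.id ∈ Representation.invariants (ρ.linHom ρ) := fun g => by
  ext v
  simp [Representation.linHom_apply]

lemma exists_eq_smul_id_of_mem_fixedBy [IsAlgClosed F] [FiniteDimensional F V]
    {ρ : Representation F G V} {X : Subgroup G} (hX : RepIrreducible (ρ.comp X.subtype))
    {f : V →ₗ[F] V} (hf : f ∈ fixedBy (ρ.linHom ρ) X) : ∃ c : F, c • LinearMap.id = f := by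
  refine exists_eq_smul_id_of_commute hX fun x v => ?_
  have hx : ρ x ∘ₗ f ∘ₗ ρ x⁻¹ = f := hf x
  conv_lhs => rw [← hx]
  simp [Representation.inv_self_apply]

end Group

section Schur

variable [Group G] [IsAlgClosed F] [FiniteDimensional F V] {ρ : Representation F G V}
  {X : Subgroup G} (hX : RepIrreducible (ρ.comp X.subtype)) {σ : Representation F G U}
  {ψ : U →ₗ[F] (V →ₗ[F] V)} (hψ : ψ ∈ EquivariantHom σ (ρ.linHom ρ)) {J : Submodule F U}
  (hJψ : Disjoint J (LinearMap.ker ψ))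
include hX hψ hJψ

lemma finrank_inf_fixedBy_le_one : Module.finrank F ↥(J ⊓ fixedBy σ X) ≤ 1 := by
  let L := J ⊓ fixedBy σ X
  have hscalar : ∀ w ∈ L, ψ w ∈ F ∙ LinearMap.id := fun w hw =>
    Submodule.mem_span_singleton.2 (exists_eq_smul_id_of_mem_fixedBy hX (map_mem_fixedBy hψ hw.2))
  have hinj : Function.Injective ((ψ.domRestrict L).codRestrict _ fun w => hscalar w w.2) :=
    fun a b h => LinearMap.injective_domRestrict_iff.2 (hJψ.mono_left inf_le_left)
      (congrArg Subtype.val h)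
  calc Module.finrank F L ≤ Module.finrank F ↥(F ∙ (LinearMap.id : V →ₗ[F] V)) :=
        LinearMap.finrank_le_finrank_of_injective hinj
    _ ≤ 1 := (finrank_span_le_card _).trans (by simp)

lemma inf_fixedBy_le_invariants (hJ : RepInvariant σ J) :
    J ⊓ fixedBy σ X ≤ Representation.invariants σ := by
  intro w hw g
  obtain ⟨c, hc⟩ := exists_eq_smul_id_of_mem_fixedBy hX (map_mem_fixedBy hψ hw.2)
  have hker : ψ (σ g w - w) = 0 := by
    rw [map_sub, hψ, ← hc, smul_id_mem_invariants_linHom, sub_self]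
  exact sub_eq_zero.1 (LinearMap.disjoint_ker.1 hJψ _ (sub_mem (hJ g w hw.1) hw.1) hker)

end Schur

lemma disjoint_map_mkQ_ker_liftQ (p : Submodule F V) (f : V →ₗ[F] W) :
    Disjoint (p.map (p ⊓ LinearMap.ker f).mkQ)
      (LinearMap.ker ((p ⊓ LinearMap.ker f).liftQ f inf_le_right)) := by
  rw [LinearMap.disjoint_ker]
  rintro _ ⟨v, hv, rfl⟩ hfv
  exact (Submodule.Quotient.mk_eq_zero _).2 ⟨hv, hfv⟩

lemma finrank_equivariantHom_le_of_surjective [Monoid G] [FiniteDimensional F W]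
    [FiniteDimensional F U] {ρ₁ : Representation F G V} {ρ₂ : Representation F G W}
    {τ : Representation F G U} {η : V →ₗ[F] W} (hη : η ∈ EquivariantHom ρ₁ ρ₂)
    (hsurj : Function.Surjective η)
    (hker : ∀ φ ∈ EquivariantHom ρ₁ τ, LinearMap.ker η ≤ LinearMap.ker φ) :
    Module.finrank F (EquivariantHom ρ₁ τ) ≤ Module.finrank F (EquivariantHom ρ₂ τ) := by
  obtain ⟨s, hs⟩ := η.exists_rightInverse_of_surjective (LinearMap.range_eq_top.2 hsurj)
  have hηs (w : W) : η (s w) = w := LinearMap.congr_fun hs w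
  have hfactor (φ) (hφ : φ ∈ EquivariantHom ρ₁ τ) (v v' : V) (h : η v = η v') : φ v = φ v' :=
    sub_eq_zero.1 <| by
      rw [← map_sub]
      exact hker φ hφ (by rw [LinearMap.mem_ker, map_sub, h, sub_self])
  let Φ := (LinearMap.lcomp F U s).restrict (p := EquivariantHom ρ₁ τ)
    (q := EquivariantHom ρ₂ τ) fun φ hφ g w => by
      change φ (s (ρ₂ g w)) = τ g (φ (s w))
      rw [← hφ]
      exact hfactor φ hφ _ _ (by rw [hη, hηs, hηs])
  refine LinearMap.finrank_le_finrank_of_injective (f := Φ) fun φ φ' h => Subtype.ext ?_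
  ext v
  have h' : φ.1 (s (η v)) = φ'.1 (s (η v)) := LinearMap.congr_fun (congrArg Subtype.val h) (η v)
  rwa [hfactor φ φ.2 _ v (hηs _), hfactor φ' φ'.2 _ v (hηs _)] at h'

end

section Incidence

variable {F : Type*} [Field F] {n : ℕ}

lemma Mrep_single {r : ℕ} (g : Equiv.Perm (Fin n)) (A : NSub n r) (b : F) :
    Mrep F n r g (Finsupp.single A b) = Finsupp.single (g • A) b :=
  Finsupp.mapDomain_single

lemma eta_single {r s : ℕ} (A : NSub n r) (b : F) :
    eta F n r s (Finsupp.single A b) =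
      ∑ B : NSub n s, if A.1 ⊆ B.1 ∨ B.1 ⊆ A.1 then Finsupp.single B b else 0 := by
  simp [eta, Finsupp.lift_apply, Finsupp.sum_single_index, Finset.smul_sum, apply_ite]

lemma eta_mem_equivariantHom (r s : ℕ) :
    eta F n r s ∈ EquivariantHom (Mrep F n r) (Mrep F n s) := by
  intro g
  suffices (eta F n r s).comp (Mrep F n r g) = (Mrep F n s g).comp (eta F n r s) from
    LinearMap.congr_fun this
  refine Finsupp.lhom_ext fun A b => ?_
  have hsub {t u : ℕ} (A : NSub n t) (B : NSub n u) : (g • A).1 ⊆ (g • B).1 ↔ A.1 ⊆ B.1 :=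
    Finset.smul_finset_subset_smul_finset_iff
  simp only [LinearMap.comp_apply, Mrep_single, eta_single, map_sum, apply_ite, map_zero]
  exact Fintype.sum_equiv (MulAction.toPerm g)⁻¹ _ _ fun B => by
    conv_lhs => rw [← smul_inv_smul g B]
    simp only [hsub]
    rfl

def NSub.singleton (x : Fin n) : NSub n 1 := ⟨{x}, Finset.card_singleton x⟩

lemma eta_single_one {r : ℕ} (hr : 1 ≤ r) (A : NSub n r) :
    eta F n r 1 (Finsupp.single A 1) = ∑ x ∈ A.1, Finsupp.single (NSub.singleton x) 1 := by
  have hbij : Function.Bijective (NSub.singleton (n := n)) :=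
    ⟨fun x y h => Finset.singleton_injective (congrArg Subtype.val h), fun B =>
      (Finset.card_eq_one.1 B.2).imp fun x hx => Subtype.ext hx.symm⟩
  have hinc (x : Fin n) : (A.1 ⊆ {x} ∨ {x} ⊆ A.1) ↔ x ∈ A.1 := by
    have hA : A.1.Nonempty := Finset.card_pos.1 (by rw [A.2]; omega)
    rw [Finset.subset_singleton_iff, Finset.singleton_subset_iff]
    constructor
    · rintro ((h | h) | h)
      · exact absurd h hA.ne_empty
      · simp [h]
      · exact h
    · exact Or.inr
  rw [eta_single, ← Fintype.sum_bijective _ hbij _ _ fun x => rfl, ← Finset.sum_filter]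
  simp only [NSub.singleton, hinc]
  rw [Finset.filter_mem_eq_inter, Finset.univ_inter]

lemma eta_three_one_surjective (h3 : (3 : F) ≠ 0) (hn : 4 ≤ n) :
    Function.Surjective (eta F n 3 1) := by
  suffices hsingle : ∀ p : Fin n,
      Finsupp.single (NSub.singleton p) 1 ∈ LinearMap.range (eta F n 3 1) by
    rw [← LinearMap.range_eq_top, eq_top_iff, ← Finsupp.basisSingleOne.span_eq, Submodule.span_le]
    rintro _ ⟨B, rfl⟩
    obtain ⟨p, hp⟩ := Finset.card_eq_one.1 B.2
    obtain rfl : B = NSub.singleton p := Subtype.ext hp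
    simpa using hsingle p
  intro p
  obtain ⟨a, ha, b, hb, c, hc, hab, hac, hbc⟩ : ∃ a ∈ ({p}ᶜ : Finset (Fin n)),
      ∃ b ∈ ({p}ᶜ : Finset (Fin n)), ∃ c ∈ ({p}ᶜ : Finset (Fin n)), a ≠ b ∧ a ≠ c ∧ b ≠ c := by
    rw [← Finset.two_lt_card, Finset.card_compl, Finset.card_singleton, Fintype.card_fin]
    omega
  simp only [Finset.mem_compl, Finset.mem_singleton] at ha hb hc
  let e (x : Fin n) : MM F n 1 := Finsupp.single (NSub.singleton x) 1
  let T (x y z : Fin n) (hxy : x ≠ y) (hxz : x ≠ z) (hyz : y ≠ z) : NSub n 3 :=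
    ⟨{x, y, z}, Finset.card_eq_three.2 ⟨x, y, z, hxy, hxz, hyz, rfl⟩⟩
  have heta (x y z : Fin n) (hxy hxz hyz) :
      eta F n 3 1 (Finsupp.single (T x y z hxy hxz hyz) 1) = e x + e y + e z := by
    rw [eta_single_one (by norm_num), Finset.sum_insert (by simp [hxy, hxz]),
      Finset.sum_insert (by simp [hyz]), Finset.sum_singleton, add_assoc]
  -- `a, b, c` each lie in two of the first three triples; removing `2 • {a, b, c}` leaves `3 • {p}`
  refine ⟨(3 : F)⁻¹ • (Finsupp.single (T p a b (Ne.symm ha) (Ne.symm hb) hab) 1 +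
    Finsupp.single (T p a c (Ne.symm ha) (Ne.symm hc) hac) 1 +
    Finsupp.single (T p b c (Ne.symm hb) (Ne.symm hc) hbc) 1 -
    (2 : F) • Finsupp.single (T a b c hab hac hbc) 1), ?_⟩
  simp only [map_smul, map_add, map_sub, heta]
  rw [show e p + e a + e b + (e p + e a + e c) + (e p + e b + e c) - (2 : F) • (e a + e b + e c)
    = (3 : F) • e p by module, smul_smul, inv_mul_cancel₀ h3, one_smul]

end Incidence

theorem stmt7_general {F : Type*} [Field F] [IsAlgClosed F] [CharP F 2]
    {n : ℕ} (hn : 6 ≤ n)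
    (V : Type*) [AddCommGroup V] [Module F V] [FiniteDimensional F V]
    (ρ : Representation F (Equiv.Perm (Fin n)) V)
    (hd : dr F n 1 ρ < dr F n 3 ρ)
    (X : Subgroup (Equiv.Perm (Fin n)))
    (hJ : ∀ (K : Submodule F (MM F n 3)) (hK : RepInvariant (Mrep F n 3) K),
      K ≤ LinearMap.ker (eta F n 3 1) →
      (LinearMap.ker (eta F n 3 1)).map K.mkQ ≠ ⊥ →
      ((LinearMap.ker (eta F n 3 1)).map K.mkQ ⊓ fixedBy (quotRep (Mrep F n 3) K hK) X ≠ ⊥ ∧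
        ((LinearMap.ker (eta F n 3 1)).map K.mkQ ⊓
            Representation.invariants (quotRep (Mrep F n 3) K hK) ≠ ⊥ →
          2 ≤ Module.finrank F
            ↥((LinearMap.ker (eta F n 3 1)).map K.mkQ ⊓
              fixedBy (quotRep (Mrep F n 3) K hK) X)))) :
    ¬ RepIrreducible (ρ.comp X.subtype) := by
  intro hX
  set N := LinearMap.ker (eta F n 3 1)
  have hη := eta_mem_equivariantHom (F := F) (n := n) 3 1
  have h3 : (3 : F) ≠ 0 := by
    rw [show (3 : F) = 2 + 1 by norm_num, CharTwo.two_eq_zero, zero_add]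
    exact one_ne_zero
  obtain ⟨φ, hφ, hNφ⟩ : ∃ φ ∈ EquivariantHom (Mrep F n 3) (ρ.linHom ρ), ¬ N ≤ LinearMap.ker φ := by
    by_contra! h
    exact hd.not_ge (finrank_equivariantHom_le_of_surjective hη
      (eta_three_one_surjective h3 (by omega)) h)
  set K := N ⊓ LinearMap.ker φ
  have hK : RepInvariant (Mrep F n 3) K := (repInvariant_ker hη).inf (repInvariant_ker hφ)
  have hJ0 : N.map K.mkQ ≠ ⊥ := fun h => by
    have hNK := LinearMap.le_ker_iff_map.2 h
    rw [Submodule.ker_mkQ] at hNK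
    exact hNφ (hNK.trans inf_le_right)
  obtain ⟨hfix, hinv⟩ := hJ K hK inf_le_left hJ0
  have hψ := liftQ_mem_equivariantHom hK hφ inf_le_right
  have hdisj := disjoint_map_mkQ_ker_liftQ N φ
  have hle_one := finrank_inf_fixedBy_le_one hX hψ hdisj
  have hfix_le := inf_fixedBy_le_invariants hX hψ hdisj (hK.map_mkQ (repInvariant_ker hη))
  have h_two_le := hinv (ne_bot_of_le_ne_bot hfix (le_inf inf_le_left hfix_le))
  exact absurd (h_two_le.trans hle_one) (by norm_num)

/-- main reduction pre-theorem: let `F` be algebraically closed of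
characteristic 2, `n ≥ 6` even, `V` an irreducible `F Sₙ`-module with `d_3(V) > d_1(V)`,
and `X ≤ Sₙ`. Let `N = Ker η_{3,1} ⊆ M_3`. If every nonzero `F Sₙ`-quotient `J` of `N`
satisfies `J^X ≠ 0`, and moreover `dim J^X ≥ 2` whenever `J^{Sₙ} ≠ 0`, then the
restriction of `V` to `X` is reducible. (A quotient of `N` by an `F Sₙ`-submodule
`K ≤ N` is realized as the image of `N` in `M_3 ⧸ K`.) -/
theorem stmt7 {F : Type*} [Field F] [IsAlgClosed F] [CharP F 2]
    {n : ℕ} (hn : 6 ≤ n) (hneven : Even n)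
    (V : Type*) [AddCommGroup V] [Module F V] [FiniteDimensional F V]
    (ρ : Representation F (Equiv.Perm (Fin n)) V)
    (hirr : RepIrreducible ρ)
    (hd : dr F n 1 ρ < dr F n 3 ρ)
    (X : Subgroup (Equiv.Perm (Fin n)))
    (hJ : ∀ (K : Submodule F (MM F n 3)) (hK : RepInvariant (Mrep F n 3) K),
      K ≤ LinearMap.ker (eta F n 3 1) →
      (LinearMap.ker (eta F n 3 1)).map K.mkQ ≠ ⊥ →
      ((LinearMap.ker (eta F n 3 1)).map K.mkQ ⊓ fixedBy (quotRep (Mrep F n 3) K hK) X ≠ ⊥ ∧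
        ((LinearMap.ker (eta F n 3 1)).map K.mkQ ⊓
            Representation.invariants (quotRep (Mrep F n 3) K hK) ≠ ⊥ →
          2 ≤ Module.finrank F
            ↥((LinearMap.ker (eta F n 3 1)).map K.mkQ ⊓
              fixedBy (quotRep (Mrep F n 3) K hK) X)))) :
    ¬ RepIrreducible (ρ.comp X.subtype) :=
  stmt7_general hn V ρ hd X hJ
end

section
/- Let m ≥ 11 and let the alternating group A_m act naturally on a set Ω, where either Ω is the set of k-element subsets of Δ = {1,…,m} with 2 ≤ k < m/2, or Ω is the set of partitions of Δ into b subsets of size a, for integers a, b ≥ 2 with ab = m. Then the number of A_m-orbits on unordered pairs of distinct elements of Ω is at least 3, unless Ω is the set of 2-element subsets of Δ, in which case this number equals 2. -/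
open scoped Pointwise

/-- `P` is an unordered pair of distinct `k`-element subsets of `{1, ..., m}`. -/
def IsSubsetPair (m k : ℕ) (P : Finset (Finset (Fin m))) : Prop :=
  P.card = 2 ∧ ∀ A ∈ P, A.card = k

/-- Two unordered pairs of distinct `k`-subsets are in the same orbit of the natural
action of the alternating group `A_m`. -/
def subsetPairRel (m k : ℕ) (P Q : {P : Finset (Finset (Fin m)) // IsSubsetPair m k P}) :
    Prop :=
  ∃ g : alternatingGroup (Fin m), (g : Equiv.Perm (Fin m)) • P.1 = Q.1

/-- `P` is a partition of `{1, ..., m}` into `b` subsets of size `a`. -/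
def IsPartitionOf (m a b : ℕ) (P : Finset (Finset (Fin m))) : Prop :=
  P.card = b ∧ (∀ A ∈ P, A.card = a) ∧ ∀ i : Fin m, ∃! A, A ∈ P ∧ i ∈ A

/-- `P` is an unordered pair of distinct partitions of `{1, ..., m}` into `b` subsets of
size `a`. -/
def IsPartitionPair (m a b : ℕ) (P : Finset (Finset (Finset (Fin m)))) : Prop :=
  P.card = 2 ∧ ∀ A ∈ P, IsPartitionOf m a b A

/-- Two unordered pairs of distinct partitions are in the same orbit of the natural
action of the alternating group `A_m`. -/
def partitionPairRel (m a b : ℕ)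
    (P Q : {P : Finset (Finset (Finset (Fin m))) // IsPartitionPair m a b P}) : Prop :=
  ∃ g : alternatingGroup (Fin m), (g : Equiv.Perm (Fin m)) • P.1 = Q.1

open Finset Equiv

/-!
Both halves rest on an `A_m`-invariant of unordered pairs. For two `k`-subsets `A ≠ B` it is
`|A ∩ B|`, which takes the values `0, 1, 2` once `k ≥ 3`. For `k = 2` only `0` and `1` occur, and
these classify the pairs: each pair is the image of `{{0,1},{2,3}}` or of `{{0,1},{0,2}}` under an
embedding `Fin 4 ↪ Δ`, and `A_m` is `4`-transitive because `m ≥ 6`.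

For two partitions the invariant is the number of `2`-subsets of `Δ` that lie inside a block of
each. Identify `Δ` with `Fin a × Fin b` (position, block), and let `X` be the partition into the
fibres of the block coordinate. Moving the points at `s` fixed positions along a permutation of
the blocks that moves `r` of them gives a partition `Y` which splits exactly `r s (a - s)` of the
pairs in `X`. Three distinct values of `r s (a - s)` come from `(r, s) = (2,1), (2,2), (2,3)` if
`b = 2`, from `(2,1), (3,1), (3,2)` if `b = 3`, and from `(2,1), (3,1), (4,1)` if `b ≥ 4`.
-/

section QuotCard

variable {X ι : Type*} {r : X → X → Prop}

lemma three_le_natCard_quot [Finite X] (f : X → ι) (hf : ∀ x y, r x y → f x = f y) {x y z : X}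
    (hxy : f x ≠ f y) (hxz : f x ≠ f z) (hyz : f y ≠ f z) : 3 ≤ Nat.card (Quot r) := by
  classical
  have hne : ∀ {x y}, f x ≠ f y → Quot.mk r x ≠ Quot.mk r y :=
    fun h he => h (congrArg (Quot.lift f hf) he)
  have := Fintype.ofFinite (Quot r)
  rw [Nat.card_eq_fintype_card]
  exact (card_eq_three.mpr ⟨_, _, _, hne hxy, hne hxz, hne hyz, rfl⟩).symm.le.trans
    (card_le_univ _)

lemma natCard_quot_eq_of_complete (f : X → ι) (hf : ∀ x y, r x y → f x = f y)
    (hcomplete : ∀ x y, f x = f y → r x y) : Nat.card (Quot r) = Nat.card (Set.range f) := by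
  rw [← Set.range_quot_lift hf]
  refine Nat.card_congr (Equiv.ofInjective _ ?_)
  rintro ⟨x⟩ ⟨y⟩ h
  exact Quot.sound (hcomplete x y h)

end QuotCard

section PairSum

variable {G α : Type*} [Group G] [MulAction G α] [DecidableEq α]

lemma Finset.sum_smul_finset {M : Type*} [AddCommMonoid M] (g : G) (s : Finset α) (f : α → M) :
    ∑ x ∈ g • s, f x = ∑ x ∈ s, f (g • x) := by
  rw [smul_finset_def, sum_image fun _ _ _ _ h => MulAction.injective g h]

def pairSum (φ : α → α → ℕ) (P : Finset α) : ℕ := ∑ x ∈ P, ∑ y ∈ P, φ x y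

lemma pairSum_smul {φ : α → α → ℕ} (hφ : ∀ (g : G) x y, φ (g • x) (g • y) = φ x y) (g : G)
    (P : Finset α) : pairSum φ (g • P) = pairSum φ P := by
  simp only [pairSum, sum_smul_finset, hφ]

lemma pairSum_pair {φ : α → α → ℕ} (hφ : ∀ x y, φ x y = φ y x) {x y : α} (hxy : x ≠ y) :
    pairSum φ {x, y} = φ x x + φ y y + 2 * φ x y := by
  simp only [pairSum, sum_pair hxy, hφ y x]
  ring

end PairSum

lemma injective_vecCons_four {α : Type*} {a b c d : α} (hab : a ≠ b) (hac : a ≠ c) (had : a ≠ d)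
    (hbc : b ≠ c) (hbd : b ≠ d) (hcd : c ≠ d) : Function.Injective ![a, b, c, d] := by
  intro i j hij
  fin_cases i <;> fin_cases j <;> simp_all [eq_comm]

section Subsets

variable {α : Type*} [DecidableEq α]

def interCard (A B : Finset α) : ℕ := #(A ∩ B)

lemma interCard_smul {G : Type*} [Group G] [MulAction G α] (g : G) (A B : Finset α) :
    interCard (g • A) (g • B) = interCard A B := by
  rw [interCard, ← smul_finset_inter, card_smul_finset, interCard]

lemma pairSum_interCard_pair {k : ℕ} {A B : Finset α} (hA : #A = k) (hB : #B = k)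
    (hAB : A ≠ B) : pairSum interCard {A, B} = 2 * k + 2 * #(A ∩ B) := by
  rw [pairSum_pair (fun A B => by rw [interCard, inter_comm, interCard]) hAB]
  simp only [interCard, inter_self, hA, hB]
  ring

lemma card_inter_lt_of_ne {k : ℕ} {A B : Finset α} (hA : #A = k) (hB : #B = k) (hAB : A ≠ B) :
    #(A ∩ B) < k := by
  by_contra! h
  have hAB' : A ⊆ B := inter_eq_left.mp (eq_of_subset_of_card_le inter_subset_left (by omega))
  exact hAB (eq_of_subset_of_card_le hAB' (by omega))

lemma exists_card_inter_eq [Fintype α] {k j : ℕ} (hjk : j ≤ k)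
    (hcard : 2 * k - j ≤ Fintype.card α) :
    ∃ A B : Finset α, #A = k ∧ #B = k ∧ #(A ∩ B) = j := by
  obtain ⟨U, -, hU⟩ := exists_subset_card_eq (s := (univ : Finset α)) (n := 2 * k - j)
    (by simpa using hcard)
  obtain ⟨A, hAU, hA⟩ := exists_subset_card_eq (s := U) (n := k) (by omega)
  obtain ⟨I, hIA, hI⟩ := exists_subset_card_eq (s := A) (n := j) (by omega)
  have hUA : #(U \ A) = k - j := by rw [card_sdiff_of_subset hAU]; omega
  refine ⟨A, I ∪ (U \ A), hA, ?_, ?_⟩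
  · rw [card_union_of_disjoint (disjoint_sdiff.mono_left hIA), hI, hUA]
    omega
  · rw [inter_union_distrib_left, inter_sdiff_self, union_empty, inter_eq_right.mpr hIA, hI]

lemma exists_eq_pair_of_mem_of_card_eq_two {A : Finset α} {p : α} (hp : p ∈ A) (hA : #A = 2) :
    ∃ q, q ≠ p ∧ A = {p, q} := by
  obtain ⟨q, hq⟩ := card_eq_one.mp (by rw [card_erase_of_mem hp, hA] : #(A.erase p) = 1)
  refine ⟨q, ne_of_mem_erase (hq ▸ mem_singleton_self q), ?_⟩
  rw [← hq, insert_erase hp]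

lemma exists_embedding_of_disjoint {A B : Finset α} (hA : #A = 2) (hB : #B = 2)
    (hAB : Disjoint A B) : ∃ e : Fin 4 ↪ α,
      A = ({0, 1} : Finset (Fin 4)).map e ∧ B = ({2, 3} : Finset (Fin 4)).map e := by
  obtain ⟨p, q, hpq, rfl⟩ := card_eq_two.mp hA
  obtain ⟨r, s, hrs, rfl⟩ := card_eq_two.mp hB
  have hne : ∀ {x y}, x ∈ ({p, q} : Finset α) → y ∈ ({r, s} : Finset α) → x ≠ y :=
    fun hx hy h => disjoint_left.mp hAB hx (h ▸ hy)
  refine ⟨⟨![p, q, r, s], injective_vecCons_four hpq (hne (by simp) (by simp))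
    (hne (by simp) (by simp)) (hne (by simp) (by simp)) (hne (by simp) (by simp)) hrs⟩, ?_, ?_⟩
  <;> simp

lemma exists_embedding_of_card_inter_eq_one [Fintype α] (hα : 4 ≤ Fintype.card α)
    {A B : Finset α} (hA : #A = 2) (hB : #B = 2) (hAB : #(A ∩ B) = 1) : ∃ e : Fin 4 ↪ α,
      A = ({0, 1} : Finset (Fin 4)).map e ∧ B = ({0, 2} : Finset (Fin 4)).map e := by
  obtain ⟨p, hp⟩ := card_eq_one.mp hAB
  have hpAB : p ∈ A ∩ B := hp ▸ mem_singleton_self p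
  obtain ⟨q, hqp, rfl⟩ := exists_eq_pair_of_mem_of_card_eq_two (mem_inter.mp hpAB).1 hA
  obtain ⟨r, hrp, rfl⟩ := exists_eq_pair_of_mem_of_card_eq_two (mem_inter.mp hpAB).2 hB
  have hqr : q ≠ r := by
    rintro rfl
    simpa [hqp] using hp.subset (by simp : q ∈ ({p, q} : Finset α) ∩ {p, q})
  obtain ⟨s, -, hs⟩ := exists_mem_notMem_of_card_lt_card (s := {p, q, r}) (t := univ)
    (by rw [card_univ]; exact card_le_three.trans_lt (by omega))
  simp only [mem_insert, mem_singleton, not_or] at hs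
  refine ⟨⟨![p, q, r, s], injective_vecCons_four hqp.symm hrp.symm (Ne.symm hs.1) hqr
    (Ne.symm hs.2.1) (Ne.symm hs.2.2)⟩, ?_, ?_⟩ <;> simp

end Subsets

lemma exists_alternatingGroup_smul_map_pair_eq {n m : ℕ} (hn : n + 2 ≤ m) (S T : Finset (Fin n))
    (e e' : Fin n ↪ Fin m) : ∃ g : alternatingGroup (Fin m),
      (g : Perm (Fin m)) • ({S.map e, T.map e} : Finset (Finset (Fin m))) =
        {S.map e', T.map e'} := by
  have := alternatingGroup.isMultiplyPretransitive (Fin m)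
  have : MulAction.IsMultiplyPretransitive (alternatingGroup (Fin m)) (Fin m) n :=
    MulAction.isMultiplyPretransitive_of_le (n := Nat.card (Fin m) - 2) (by simp; omega)
      (by simp)
  obtain ⟨g, rfl⟩ := MulAction.exists_smul_eq (alternatingGroup (Fin m)) e e'
  have hmap : ∀ U : Finset (Fin n), (g : Perm (Fin m)) • U.map e = U.map (g • e) := fun U => by
    ext
    simp [mem_smul_finset, Perm.smul_def, Subgroup.smul_def]
  exact ⟨g, by rw [smul_finset_insert, smul_finset_singleton, hmap, hmap]⟩

section SubsetPairs

variable {m k : ℕ}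

lemma IsSubsetPair.exists_eq_pair {P : Finset (Finset (Fin m))} (hP : IsSubsetPair m k P) :
    ∃ A B, A ≠ B ∧ #A = k ∧ #B = k ∧ P = {A, B} := by
  obtain ⟨A, B, hAB, rfl⟩ := card_eq_two.mp hP.1
  exact ⟨A, B, hAB, hP.2 A (by simp), hP.2 B (by simp), rfl⟩

lemma pairSum_interCard_eq_of_subsetPairRel
    (P Q : {P : Finset (Finset (Fin m)) // IsSubsetPair m k P}) (h : subsetPairRel m k P Q) :
    pairSum interCard P.1 = pairSum interCard Q.1 := by
  obtain ⟨g, hg⟩ := h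
  rw [← hg, pairSum_smul (interCard_smul (G := Perm (Fin m)))]

lemma exists_subsetPair_pairSum_interCard {j : ℕ} (hjk : j < k) (hkm : 2 * k ≤ m) :
    ∃ P : {P : Finset (Finset (Fin m)) // IsSubsetPair m k P},
      pairSum interCard P.1 = 2 * k + 2 * j := by
  obtain ⟨A, B, hA, hB, hAB⟩ := exists_card_inter_eq (α := Fin m) hjk.le (by simp; omega)
  have hne : A ≠ B := by
    rintro rfl
    rw [inter_self] at hAB
    omega
  refine ⟨⟨{A, B}, card_pair hne, ?_⟩, by rw [pairSum_interCard_pair hA hB hne, hAB]⟩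
  simp [hA, hB]

lemma three_le_natCard_subsetPairRel (hk : 3 ≤ k) (hkm : 2 * k < m) :
    3 ≤ Nat.card (Quot (subsetPairRel m k)) := by
  obtain ⟨P₀, h₀⟩ := exists_subsetPair_pairSum_interCard (j := 0) (by omega) hkm.le
  obtain ⟨P₁, h₁⟩ := exists_subsetPair_pairSum_interCard (j := 1) (by omega) hkm.le
  obtain ⟨P₂, h₂⟩ := exists_subsetPair_pairSum_interCard (j := 2) (by omega) hkm.le
  exact three_le_natCard_quot _ pairSum_interCard_eq_of_subsetPairRel (x := P₀) (y := P₁)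
    (z := P₂) (by omega) (by omega) (by omega)

lemma subsetPairRel_two_of_pairSum_interCard_eq (hm : 6 ≤ m)
    (P Q : {P : Finset (Finset (Fin m)) // IsSubsetPair m 2 P})
    (h : pairSum interCard P.1 = pairSum interCard Q.1) : subsetPairRel m 2 P Q := by
  obtain ⟨A, B, hAB, hA, hB, hP⟩ := P.2.exists_eq_pair
  obtain ⟨A', B', hAB', hA', hB', hQ⟩ := Q.2.exists_eq_pair
  rw [hP, hQ, pairSum_interCard_pair hA hB hAB, pairSum_interCard_pair hA' hB' hAB'] at h
  have hlt := card_inter_lt_of_ne hA hB hAB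
  rw [subsetPairRel, hP, hQ]
  obtain h0 | h1 : #(A ∩ B) = 0 ∨ #(A ∩ B) = 1 := by omega
  · have hdisj : ∀ {C D : Finset (Fin m)}, #(C ∩ D) = 0 → Disjoint C D :=
      fun h => disjoint_iff_inter_eq_empty.mpr (card_eq_zero.mp h)
    obtain ⟨e, rfl, rfl⟩ := exists_embedding_of_disjoint hA hB (hdisj h0)
    obtain ⟨e', rfl, rfl⟩ := exists_embedding_of_disjoint hA' hB' (hdisj (by omega))
    exact exists_alternatingGroup_smul_map_pair_eq (by omega) _ _ e e'
  · have hcard : 4 ≤ Fintype.card (Fin m) := by simp; omega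
    obtain ⟨e, rfl, rfl⟩ := exists_embedding_of_card_inter_eq_one hcard hA hB h1
    obtain ⟨e', rfl, rfl⟩ := exists_embedding_of_card_inter_eq_one hcard hA' hB' (by omega)
    exact exists_alternatingGroup_smul_map_pair_eq (by omega) _ _ e e'

lemma range_pairSum_interCard_two (hm : 4 ≤ m) :
    Set.range (fun P : {P : Finset (Finset (Fin m)) // IsSubsetPair m 2 P} =>
      pairSum interCard P.1) = {4, 6} := by
  ext n
  constructor
  · rintro ⟨P, rfl⟩
    obtain ⟨A, B, hAB, hA, hB, hP⟩ := P.2.exists_eq_pair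
    have hlt := card_inter_lt_of_ne hA hB hAB
    simp only [hP, pairSum_interCard_pair hA hB hAB, Set.mem_insert_iff, Set.mem_singleton_iff]
    omega
  · rintro (rfl | rfl)
    · exact exists_subsetPair_pairSum_interCard (j := 0) (by omega) hm
    · exact exists_subsetPair_pairSum_interCard (j := 1) (by omega) hm

lemma natCard_subsetPairRel_two (hm : 6 ≤ m) : Nat.card (Quot (subsetPairRel m 2)) = 2 := by
  rw [natCard_quot_eq_of_complete _ pairSum_interCard_eq_of_subsetPairRel
    (subsetPairRel_two_of_pairSum_interCard_eq hm), range_pairSum_interCard_two (by omega),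
    Nat.card_coe_set_eq, Set.ncard_pair (by norm_num)]

end SubsetPairs

section SharedPairs

variable {α : Type*} [DecidableEq α]

def sharedPairs (X Y : Finset (Finset α)) : ℕ := ∑ A ∈ X, ∑ B ∈ Y, (#(A ∩ B)).choose 2

lemma sharedPairs_comm (X Y : Finset (Finset α)) : sharedPairs X Y = sharedPairs Y X := by
  rw [sharedPairs, sum_comm]
  simp only [sharedPairs, inter_comm]

lemma sharedPairs_smul {G : Type*} [Group G] [MulAction G α] (g : G) (X Y : Finset (Finset α)) :
    sharedPairs (g • X) (g • Y) = sharedPairs X Y := by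
  simp only [sharedPairs, sum_smul_finset, ← smul_finset_inter, card_smul_finset]

lemma sharedPairs_self {m a b : ℕ} {X : Finset (Finset (Fin m))} (hX : IsPartitionOf m a b X) :
    sharedPairs X X = b * a.choose 2 := by
  obtain ⟨hcard, hblock, hunique⟩ := hX
  have hdisj : ∀ A ∈ X, ∀ B ∈ X, B ≠ A → A ∩ B = ∅ := by
    refine fun A hA B hB hBA => eq_empty_of_forall_notMem fun x hx => hBA ?_
    obtain ⟨C, -, huniq⟩ := hunique x
    exact (huniq B ⟨hB, (mem_inter.mp hx).2⟩).trans (huniq A ⟨hA, (mem_inter.mp hx).1⟩).symm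
  have hrow : ∀ A ∈ X, ∑ B ∈ X, (#(A ∩ B)).choose 2 = a.choose 2 := fun A hA => by
    rw [sum_eq_single_of_mem A hA fun B hB hBA => by rw [hdisj A hA B hB hBA]; rfl, inter_self,
      hblock A hA]
  rw [sharedPairs, sum_congr rfl hrow, sum_const, hcard, smul_eq_mul]

end SharedPairs

section Fibers

variable {α β : Type*} [Fintype α] [DecidableEq β]

lemma fiber_injective {L : α → β} (hL : ∀ u, ({x | L x = u} : Finset α).Nonempty) :
    Function.Injective fun u => ({x | L x = u} : Finset α) := by
  intro u v huv
  obtain ⟨x, hx⟩ := hL u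
  have hx' : x ∈ ({x | L x = v} : Finset α) := by simp only at huv; rwa [← huv]
  simp only [mem_filter, mem_univ, true_and] at hx hx'
  rw [← hx, ← hx']

variable [DecidableEq α] [Fintype β]

def fibers (L : α → β) : Finset (Finset α) := univ.image fun u => ({x | L x = u} : Finset α)

lemma sharedPairs_fibers {L L' : α → β} (hL : ∀ u, ({x | L x = u} : Finset α).Nonempty)
    (hL' : ∀ u, ({x | L' x = u} : Finset α).Nonempty) :
    sharedPairs (fibers L) (fibers L') = ∑ u, ∑ v, (#{x | L x = u ∧ L' x = v}).choose 2 := by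
  simp only [sharedPairs, fibers, sum_image fun u _ v _ h => fiber_injective hL h,
    sum_image fun u _ v _ h => fiber_injective hL' h, ← filter_and]

lemma isPartitionOf_fibers {m a : ℕ} {L : Fin m → β} (ha : 0 < a)
    (hL : ∀ u, #({x | L x = u} : Finset (Fin m)) = a) :
    IsPartitionOf m a (Fintype.card β) (fibers L) := by
  have hne : ∀ u, ({x | L x = u} : Finset (Fin m)).Nonempty :=
    fun u => card_pos.mp ((hL u).symm ▸ ha)
  refine ⟨by rw [fibers, card_image_of_injective _ (fiber_injective hne), card_univ], ?_, ?_⟩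
  · simp only [fibers, mem_image, mem_univ, true_and, forall_exists_index, forall_apply_eq_imp_iff]
    exact hL
  · intro i
    refine ⟨({x | L x = L i} : Finset (Fin m)), ⟨mem_image_of_mem _ (mem_univ _), by simp⟩, ?_⟩
    rintro A ⟨hA, hiA⟩
    obtain ⟨u, -, rfl⟩ := mem_image.mp hA
    simp only [mem_filter, mem_univ, true_and] at hiA
    rw [hiA]

end Fibers

lemma Nat.choose_two_add (s t : ℕ) : (s + t).choose 2 = s.choose 2 + t.choose 2 + s * t := by
  induction t with
  | zero => simp
  | succ t ih =>
    rw [← add_assoc, Nat.choose_succ_succ', Nat.choose_one_right, ih, Nat.choose_succ_succ',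
      Nat.choose_one_right]
    ring

lemma Equiv.Perm.exists_card_support_eq {β : Type*} [Fintype β] [DecidableEq β] {r : ℕ}
    (hr : 2 ≤ r) (hrβ : r ≤ Fintype.card β) : ∃ c : Perm β, #c.support = r := by
  obtain ⟨c, hc⟩ := (Equiv.Perm.exists_with_cycleType_iff β (m := {r})).mpr
    ⟨by simpa using hrβ, by simpa using hr⟩
  exact ⟨c, by rw [← Equiv.Perm.sum_cycleType, hc, Multiset.sum_singleton]⟩

/-- Reading `γ × β` as the blocks `γ × {t}`, moves the points at the positions in `S` from
block `t` to block `c t`. -/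
def blockShear {γ β : Type*} [DecidableEq γ] (c : Perm β) (S : Finset γ) : Perm (γ × β) :=
  Equiv.prodShear (Equiv.refl γ) fun p => if p ∈ S then c else 1

lemma blockShear_apply_snd {γ β : Type*} [DecidableEq γ] (c : Perm β) (S : Finset γ) (p : γ)
    (t : β) : (blockShear c S (p, t)).2 = if p ∈ S then c t else t := by
  by_cases hp : p ∈ S <;> simp [blockShear, hp]

section BlockShear

variable {α γ β : Type*} [Fintype α] [Fintype γ] [Fintype β] [DecidableEq β]

lemma card_filter_snd_eq_and (f : α ≃ γ × β) (u : β) (R : γ × β → Prop) [DecidablePred R] :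
    #{x | (f x).2 = u ∧ R (f x)} = #{p | R (p, u)} := by
  rw [card_equiv f (t := {y | y.2 = u ∧ R y}) fun x => by simp, card_filter, card_filter,
    Fintype.sum_prod_type]
  simp only [ite_and, sum_ite_eq', mem_univ, if_true]

lemma card_filter_snd_eq (f : α ≃ γ × β) (u : β) : #{x | (f x).2 = u} = Fintype.card γ := by
  simpa using card_filter_snd_eq_and f u fun _ => True

variable [DecidableEq γ]

lemma sum_choose_two_card_filter_ite (S : Finset γ) {w u : β} (hwu : w ≠ u) :
    ∑ v, (#{p | (if p ∈ S then w else u) = v}).choose 2 =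
      (#S).choose 2 + (Fintype.card γ - #S).choose 2 := by
  rw [Fintype.sum_eq_add w u hwu fun v hv => ?_]
  · congr 2
    · congr 1; ext p; by_cases hp : p ∈ S <;> simp [hp, hwu.symm]
    · rw [← card_compl]; congr 1; ext p; by_cases hp : p ∈ S <;> simp [hp, hwu]
  · rw [filter_false_of_mem fun p _ => by split_ifs <;> tauto]
    rfl

lemma sum_choose_two_card_filter_blockShear (f : α ≃ γ × β) (c : Perm β) (S : Finset γ) (u : β) :
    ∑ v, (#{x | (f x).2 = u ∧ (blockShear c S (f x)).2 = v}).choose 2 =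
      if c u = u then (Fintype.card γ).choose 2
      else (#S).choose 2 + (Fintype.card γ - #S).choose 2 := by
  rw [sum_congr rfl fun v _ => by rw [card_filter_snd_eq_and f u fun y => (blockShear c S y).2 = v]]
  simp only [blockShear_apply_snd]
  split_ifs with hcu
  · simp only [hcu, ite_self]
    rw [Fintype.sum_eq_single u fun v hv => by simp [Ne.symm hv]]
    simp
  · exact sum_choose_two_card_filter_ite S hcu

lemma sharedPairs_fibers_blockShear [DecidableEq α] [Nonempty γ] (f : α ≃ γ × β) (c : Perm β)
    (S : Finset γ) :
    sharedPairs (fibers fun x => (f x).2) (fibers fun x => (blockShear c S (f x)).2)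
      + #c.support * (#S * (Fintype.card γ - #S)) = Fintype.card β * (Fintype.card γ).choose 2 := by
  have hne : ∀ (f : α ≃ γ × β) u, ({x | (f x).2 = u} : Finset α).Nonempty := fun f u =>
    card_pos.mp (by rw [card_filter_snd_eq]; exact Fintype.card_pos)
  have hC : (Fintype.card γ).choose 2 =
      (#S).choose 2 + (Fintype.card γ - #S).choose 2 + #S * (Fintype.card γ - #S) := by
    rw [← Nat.choose_two_add, Nat.add_sub_cancel' (card_le_univ S)]
  have hsupp : #{u | ¬c u = u} = #c.support := rfl
  rw [sharedPairs_fibers (L' := fun x => (blockShear c S (f x)).2) (hne f)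
      (hne (f.trans (blockShear c S))),
    sum_congr rfl fun u _ => sum_choose_two_card_filter_blockShear f c S u, sum_ite, sum_const,
    sum_const, smul_eq_mul, smul_eq_mul, ← card_univ (α := β),
    ← card_filter_add_card_filter_not (s := univ) fun u => c u = u, hC, hsupp]
  ring

end BlockShear

section PartitionPairs

variable {m a b : ℕ}

lemma pairSum_sharedPairs_eq_of_partitionPairRel
    (P Q : {P : Finset (Finset (Finset (Fin m))) // IsPartitionPair m a b P})
    (h : partitionPairRel m a b P Q) : pairSum sharedPairs P.1 = pairSum sharedPairs Q.1 := by
  obtain ⟨g, hg⟩ := h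
  rw [← hg, pairSum_smul (sharedPairs_smul (G := Perm (Fin m)))]

lemma exists_partitionPair_pairSum_sharedPairs (hab : a * b = m) {r s : ℕ} (hr : 2 ≤ r)
    (hrb : r ≤ b) (hs : 0 < s) (hsa : s < a) :
    ∃ P : {P : Finset (Finset (Finset (Fin m))) // IsPartitionPair m a b P},
      pairSum sharedPairs P.1 + 2 * (r * (s * (a - s))) = 4 * (b * a.choose 2) := by
  have : NeZero a := ⟨by omega⟩
  let e : Fin m ≃ Fin a × Fin b := Fintype.equivOfCardEq (by simp [hab])
  obtain ⟨c, hc⟩ := Equiv.Perm.exists_card_support_eq (β := Fin b) hr (by simpa using hrb)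
  obtain ⟨S, -, hS⟩ := exists_subset_card_eq (s := (univ : Finset (Fin a))) (n := s)
    (by simp; omega)
  have hXY := sharedPairs_fibers_blockShear e c S
  simp only [hc, hS, Fintype.card_fin] at hXY
  set X := fibers fun x => (e x).2
  set Y := fibers fun x => (blockShear c S (e x)).2
  have hpart : ∀ f : Fin m ≃ Fin a × Fin b, IsPartitionOf m a b (fibers fun x => (f x).2) := by
    intro f
    have := isPartitionOf_fibers (a := a) (by omega) fun u => by
      simpa using card_filter_snd_eq f u
    rwa [Fintype.card_fin] at this
  have hX : IsPartitionOf m a b X := hpart e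
  have hY : IsPartitionOf m a b Y := hpart (e.trans (blockShear c S))
  have hsplit : 0 < r * (s * (a - s)) := Nat.mul_pos (by omega) (Nat.mul_pos hs (by omega))
  have hne : X ≠ Y := by
    intro h
    rw [← h, sharedPairs_self hX] at hXY
    omega
  refine ⟨⟨{X, Y}, card_pair hne, by simp [hX, hY]⟩, ?_⟩
  rw [pairSum_pair sharedPairs_comm hne, sharedPairs_self hX, sharedPairs_self hY]
  omega

lemma three_le_natCard_partitionPairRel_of_splits (hab : a * b = m) {r₁ s₁ r₂ s₂ r₃ s₃ : ℕ}
    (h₁ : 2 ≤ r₁ ∧ r₁ ≤ b ∧ 0 < s₁ ∧ s₁ < a) (h₂ : 2 ≤ r₂ ∧ r₂ ≤ b ∧ 0 < s₂ ∧ s₂ < a)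
    (h₃ : 2 ≤ r₃ ∧ r₃ ≤ b ∧ 0 < s₃ ∧ s₃ < a)
    (h₁₂ : r₁ * (s₁ * (a - s₁)) ≠ r₂ * (s₂ * (a - s₂)))
    (h₁₃ : r₁ * (s₁ * (a - s₁)) ≠ r₃ * (s₃ * (a - s₃)))
    (h₂₃ : r₂ * (s₂ * (a - s₂)) ≠ r₃ * (s₃ * (a - s₃))) :
    3 ≤ Nat.card (Quot (partitionPairRel m a b)) := by
  obtain ⟨P₁, hP₁⟩ := exists_partitionPair_pairSum_sharedPairs hab h₁.1 h₁.2.1 h₁.2.2.1 h₁.2.2.2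
  obtain ⟨P₂, hP₂⟩ := exists_partitionPair_pairSum_sharedPairs hab h₂.1 h₂.2.1 h₂.2.2.1 h₂.2.2.2
  obtain ⟨P₃, hP₃⟩ := exists_partitionPair_pairSum_sharedPairs hab h₃.1 h₃.2.1 h₃.2.2.1 h₃.2.2.2
  exact three_le_natCard_quot _ pairSum_sharedPairs_eq_of_partitionPairRel (x := P₁) (y := P₂)
    (z := P₃) (by omega) (by omega) (by omega)

lemma three_le_natCard_partitionPairRel (hm : 11 ≤ m) (ha : 2 ≤ a) (hb : 2 ≤ b)
    (hab : a * b = m) : 3 ≤ Nat.card (Quot (partitionPairRel m a b)) := by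
  obtain rfl | rfl | hb4 : b = 2 ∨ b = 3 ∨ 4 ≤ b := by omega
  · exact three_le_natCard_partitionPairRel_of_splits hab (r₁ := 2) (s₁ := 1) (r₂ := 2) (s₂ := 2)
      (r₃ := 2) (s₃ := 3) (by omega) (by omega) (by omega) (by omega) (by omega) (by omega)
  · exact three_le_natCard_partitionPairRel_of_splits hab (r₁ := 2) (s₁ := 1) (r₂ := 3) (s₂ := 1)
      (r₃ := 3) (s₃ := 2) (by omega) (by omega) (by omega) (by omega) (by omega) (by omega)
  · exact three_le_natCard_partitionPairRel_of_splits hab (r₁ := 2) (s₁ := 1) (r₂ := 3) (s₂ := 1)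
      (r₃ := 4) (s₃ := 1) (by omega) (by omega) (by omega) (by omega) (by omega) (by omega)

end PartitionPairs

/-- let `m ≥ 11` and let `A_m` act naturally on a set `Ω`, where `Ω` is
either the set of `k`-element subsets of `{1, ..., m}` (`2 ≤ k < m/2`) or the set of
partitions of `{1, ..., m}` into `b` subsets of size `a` (`a, b ≥ 2`, `ab = m`). Then the
number of `A_m`-orbits on unordered pairs of distinct elements of `Ω` is at least 3,
unless `Ω` is the set of `2`-element subsets, in which case this number equals 2. -/
theorem stmt12 (m : ℕ) (hm : 11 ≤ m) :
    (∀ k, 2 ≤ k → 2 * k < m →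
      (3 ≤ k → 3 ≤ Nat.card (Quot (subsetPairRel m k))) ∧
      (k = 2 → Nat.card (Quot (subsetPairRel m k)) = 2)) ∧
    (∀ a b, 2 ≤ a → 2 ≤ b → a * b = m →
      3 ≤ Nat.card (Quot (partitionPairRel m a b))) := by
  refine ⟨fun k _ hkm => ⟨fun hk => three_le_natCard_subsetPairRel hk hkm, ?_⟩,
    fun a b ha hb hab => three_le_natCard_partitionPairRel hm ha hb hab⟩
  rintro rfl
  exact natCard_subsetPairRel_two (by omega)
end

section
/- Let F be an algebraically closed field, n ≥ 3, and fix the natural embedding of S_{n−1} into S_n (as the stabilizer of the point n). Let U be a finite-dimensional F-vector space and Ψ : S_{n−1} → GL(U) an irreducible representation. If Φ_1, Φ_2 : S_n → GL(U) are representations with Φ_1|_{S_{n−1}} = Ψ = Φ_2|_{S_{n−1}}, then Φ_1 = Φ_2. In particular, Ψ has at most one extension to S_n. -/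
/-!
For a representation `Φ` of `Perm α` put `L(p) = ∑ k, Φ (swap k p)` (a Jucys–Murphy element
shifted by `1`). Since `Φ g * L(p) = L(g p) * Φ g`, the element `L(p)` commutes with the
restriction `Ψ` and is a scalar by Schur's lemma, and then so is every `L(q)`, with the same
scalar. For two extensions `Φ₁, Φ₂` of `Ψ`, all terms of `L₂(z) - L₁(z)` cancel except the one
for `swap p z`, so the involutions `Φ₁ (swap p z)` and `Φ₂ (swap p z)` differ by a scalar `δ`.
If `δ ≠ 0`, expanding `(X + δ)² = 1` shows that `X` is itself a scalar; then each `Φᵢ` sends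
all transpositions to the same central element, in particular to `Φᵢ (swap o z)` for a third
point `o`, and there `Φ₁` and `Φ₂` agree because `swap o z` fixes `p`. As transpositions
generate `Perm α`, `Φ₁ = Φ₂`.
-/

open Equiv

theorem RepIrreducible.exists_eq_algebraMap_of_commute {F G U : Type*} [Field F]
    [IsAlgClosed F] [Monoid G] [AddCommGroup U] [Module F U] [FiniteDimensional F U]
    {Ψ : Representation F G U} (hΨ : RepIrreducible Ψ) {A : Module.End F U}
    (hA : ∀ g, Commute A (Ψ g)) : ∃ c : F, A = algebraMap F (Module.End F U) c := by
  have : Nontrivial U := hΨ.1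
  obtain ⟨c, hc⟩ := Module.End.exists_eigenvalue A
  have hinv : RepInvariant Ψ (A.eigenspace c) := by
    intro g v hv
    rw [Module.End.mem_eigenspace_iff] at hv ⊢
    rw [← Module.End.mul_apply, (hA g).eq, Module.End.mul_apply, hv, map_smul]
  refine ⟨c, LinearMap.ext fun v => ?_⟩
  have hv : v ∈ A.eigenspace c := by
    rw [(hΨ.2 _ hinv).resolve_left hc]
    exact Submodule.mem_top
  rw [Module.algebraMap_end_apply, ← Module.End.mem_eigenspace_iff]
  exact hv

theorem eq_zero_or_exists_eq_algebraMap_of_mul_self_eq_one {F A : Type*} [Field F] [Ring A]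
    [Algebra F A] [Nontrivial A] {x : A} {δ : F} (hx : x * x = 1)
    (hxδ : (x + algebraMap F A δ) * (x + algebraMap F A δ) = 1) :
    δ = 0 ∨ ∃ e : F, x = algebraMap F A e := by
  by_cases hδ : δ = 0
  · exact Or.inl hδ
  right
  have hsum : algebraMap F A δ * (algebraMap F A 2 * x + algebraMap F A δ) = 0 := by
    have := Algebra.commutes δ x
    rw [map_ofNat]
    calc _ = (x + algebraMap F A δ) * (x + algebraMap F A δ) - x * x := by
          simp only [mul_add, add_mul, this, two_mul]; abel
      _ = 0 := by rw [hx, hxδ, sub_self]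
  have hlin : algebraMap F A 2 * x = algebraMap F A (-δ) := by
    have := congrArg (algebraMap F A δ⁻¹ * ·) hsum
    simp only [← mul_assoc, ← map_mul, inv_mul_cancel₀ hδ, map_one, one_mul, mul_zero] at this
    rw [map_neg, eq_neg_of_add_eq_zero_left this]
  have h2 : (2 : F) ≠ 0 := by
    rintro h2
    rw [h2, map_zero, zero_mul, eq_comm, map_eq_zero_iff _ (algebraMap F A).injective,
      neg_eq_zero] at hlin
    exact hδ hlin
  refine ⟨2⁻¹ * -δ, ?_⟩
  rw [map_mul, ← hlin, ← mul_assoc, ← map_mul, inv_mul_cancel₀ h2, map_one, one_mul]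

section Perm

variable {α : Type*} [DecidableEq α]

theorem MonoidHom.map_swap_eq_of_commute {M : Type*} [Monoid M] (Φ : Perm α →* M)
    {a b x y : α} (hab : a ≠ b) (hxy : x ≠ y) (hcomm : ∀ m, Commute (Φ (swap a b)) m) :
    Φ (swap x y) = Φ (swap a b) := by
  obtain ⟨c, hc⟩ := isConj_iff.mp (Perm.isConj_swap hab hxy)
  rw [← hc, map_mul, map_mul, ← (hcomm (Φ c)).eq, mul_assoc, ← map_mul, mul_inv_cancel,
    map_one, mul_one]

theorem MonoidHom.map_swap_mul_self {M : Type*} [Monoid M] (Φ : Perm α →* M) (x y : α) :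
    Φ (swap x y) * Φ (swap x y) = 1 := by
  rw [← map_mul, swap_mul_self, map_one]

theorem MonoidHom.eq_of_map_swap_eq [Finite α] {M : Type*} [Monoid M] {Φ₁ Φ₂ : Perm α →* M} (p : α)
    (hstab : ∀ g : Perm α, g p = p → Φ₁ g = Φ₂ g)
    (hswap : ∀ z, z ≠ p → Φ₁ (swap p z) = Φ₂ (swap p z)) : Φ₁ = Φ₂ := by
  refine MonoidHom.eq_of_eqOn_denseM Perm.mclosure_isSwap ?_
  rintro _ ⟨x, y, hxy, rfl⟩
  by_cases hx : x = p
  · subst hx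
    exact hswap y hxy.symm
  by_cases hy : y = p
  · subst hy
    rw [swap_comm]
    exact hswap x hx
  exact hstab _ (swap_apply_of_ne_of_ne (Ne.symm hx) (Ne.symm hy))

variable [Fintype α] {F U : Type*} [Field F] [AddCommGroup U] [Module F U]

def swapSum (Φ : Representation F (Perm α) U) (p : α) : Module.End F U :=
  ∑ k, Φ (swap k p)

theorem map_mul_swapSum (Φ : Representation F (Perm α) U) (g : Perm α) (p : α) :
    Φ g * swapSum Φ p = swapSum Φ (g p) * Φ g := by
  simp only [swapSum, Finset.mul_sum, Finset.sum_mul, ← map_mul, mul_swap_eq_swap_mul]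
  exact Fintype.sum_equiv g _ _ fun _ => rfl

theorem swapSum_eq_algebraMap_of_eq {Φ : Representation F (Perm α) U} {p : α} {c : F}
    (hc : swapSum Φ p = algebraMap F (Module.End F U) c) (q : α) :
    swapSum Φ q = algebraMap F (Module.End F U) c := by
  have hconj := map_mul_swapSum Φ (swap q p) p
  rw [swap_apply_right, hc, ← Algebra.commutes] at hconj
  simpa only [mul_assoc, MonoidHom.map_swap_mul_self, mul_one] using
    (congrArg (· * Φ (swap q p)) hconj).symm

theorem swapSum_sub_swapSum {Φ₁ Φ₂ : Representation F (Perm α) U} {p : α}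
    (hstab : ∀ g : Perm α, g p = p → Φ₁ g = Φ₂ g) {z : α} (hz : z ≠ p) :
    swapSum Φ₂ z - swapSum Φ₁ z = Φ₂ (swap p z) - Φ₁ (swap p z) := by
  rw [swapSum, swapSum, ← Finset.sum_sub_distrib, Finset.sum_eq_single p]
  · intro k _ hkp
    rw [hstab _ (swap_apply_of_ne_of_ne hkp.symm hz.symm), sub_self]
  · simp

theorem exists_swapSum_eq_algebraMap [IsAlgClosed F] [FiniteDimensional F U] {p : α}
    {Ψ : Representation F (MulAction.stabilizer (Perm α) p) U} (hΨ : RepIrreducible Ψ)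
    {Φ : Representation F (Perm α) U} (h : Φ.comp (MulAction.stabilizer (Perm α) p).subtype = Ψ) :
    ∃ c : F, ∀ q, swapSum Φ q = algebraMap F (Module.End F U) c := by
  suffices ∀ g, Commute (swapSum Φ p) (Ψ g) by
    obtain ⟨c, hc⟩ := hΨ.exists_eq_algebraMap_of_commute this
    exact ⟨c, swapSum_eq_algebraMap_of_eq hc⟩
  intro g
  have hgp : (g : Perm α) p = p := g.2
  rw [← h, MonoidHom.comp_apply, Subgroup.subtype_apply, Commute, SemiconjBy,
    map_mul_swapSum, hgp]

theorem map_swap_eq_of_swapSum_eq_algebraMap [Nontrivial U] {Φ₁ Φ₂ : Representation F (Perm α) U}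
    {p z o : α} (hz : z ≠ p) (ho : o ≠ p) (hoz : o ≠ z)
    (hstab : ∀ g : Perm α, g p = p → Φ₁ g = Φ₂ g) {c₁ c₂ : F}
    (hc₁ : ∀ q, swapSum Φ₁ q = algebraMap F (Module.End F U) c₁)
    (hc₂ : ∀ q, swapSum Φ₂ q = algebraMap F (Module.End F U) c₂) :
    Φ₁ (swap p z) = Φ₂ (swap p z) := by
  have hdiff : Φ₂ (swap p z) = Φ₁ (swap p z) + algebraMap F (Module.End F U) (c₂ - c₁) := by
    rw [map_sub, ← hc₁ z, ← hc₂ z, swapSum_sub_swapSum hstab hz, add_sub_cancel]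
  have hinvol := Φ₂.map_swap_mul_self p z
  rw [hdiff] at hinvol
  rcases eq_zero_or_exists_eq_algebraMap_of_mul_self_eq_one (Φ₁.map_swap_mul_self p z) hinvol with
    hδ | ⟨e, he⟩
  · rw [hdiff, hδ, map_zero, add_zero]
  · have hcentral₁ : ∀ m, Commute (Φ₁ (swap p z)) m := fun m => he ▸ Algebra.commutes e m
    have hcentral₂ : ∀ m, Commute (Φ₂ (swap p z)) m := fun m => by
      rw [hdiff, he, ← map_add]
      exact Algebra.commutes _ m
    calc Φ₁ (swap p z) = Φ₁ (swap o z) := (Φ₁.map_swap_eq_of_commute hz.symm hoz hcentral₁).symm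
      _ = Φ₂ (swap o z) := hstab _ (swap_apply_of_ne_of_ne ho.symm hz.symm)
      _ = Φ₂ (swap p z) := Φ₂.map_swap_eq_of_commute hz.symm hoz hcentral₂

theorem Representation.eq_of_comp_stabilizer_subtype_eq [IsAlgClosed F] [FiniteDimensional F U]
    (hα : 2 < Fintype.card α) {p : α}
    {Ψ : Representation F (MulAction.stabilizer (Perm α) p) U} (hΨ : RepIrreducible Ψ)
    {Φ₁ Φ₂ : Representation F (Perm α) U}
    (h₁ : Φ₁.comp (MulAction.stabilizer (Perm α) p).subtype = Ψ)
    (h₂ : Φ₂.comp (MulAction.stabilizer (Perm α) p).subtype = Ψ) :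
    Φ₁ = Φ₂ := by
  have : Nontrivial U := hΨ.1
  have hstab (g : Perm α) (hg : g p = p) : Φ₁ g = Φ₂ g :=
    DFunLike.congr_fun (h₁.trans h₂.symm) ⟨g, hg⟩
  obtain ⟨c₁, hc₁⟩ := exists_swapSum_eq_algebraMap hΨ h₁
  obtain ⟨c₂, hc₂⟩ := exists_swapSum_eq_algebraMap hΨ h₂
  refine MonoidHom.eq_of_map_swap_eq p hstab fun z hz => ?_
  have hcard : 1 < (Finset.univ.erase p).card := by
    rw [Finset.card_erase_of_mem (Finset.mem_univ p), Finset.card_univ]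
    omega
  obtain ⟨o, ho, hoz⟩ := Finset.exists_mem_ne hcard z
  exact map_swap_eq_of_swapSum_eq_algebraMap hz (Finset.ne_of_mem_erase ho) hoz hstab hc₁ hc₂

end Perm

/-- let `F` be algebraically closed, `n ≥ 3`, and embed `S_{n-1}` into
`Sₙ` as the stabilizer of the last point. If `Ψ` is an irreducible representation of
`S_{n-1}` on a finite-dimensional space `U`, and `Φ₁, Φ₂` are representations of `Sₙ`
on `U` both restricting to `Ψ` on `S_{n-1}`, then `Φ₁ = Φ₂`; in particular `Ψ` has at
most one extension to `Sₙ`. -/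
theorem stmt18 {F : Type*} [Field F] [IsAlgClosed F]
    {n : ℕ} (hn : 3 ≤ n)
    (U : Type*) [AddCommGroup U] [Module F U] [FiniteDimensional F U]
    (Ψ : Representation F
      (MulAction.stabilizer (Equiv.Perm (Fin n)) (⟨n - 1, by omega⟩ : Fin n)) U)
    (hΨ : RepIrreducible Ψ)
    (Φ₁ Φ₂ : Representation F (Equiv.Perm (Fin n)) U)
    (h₁ : Φ₁.comp (MulAction.stabilizer (Equiv.Perm (Fin n))
      (⟨n - 1, by omega⟩ : Fin n)).subtype = Ψ)
    (h₂ : Φ₂.comp (MulAction.stabilizer (Equiv.Perm (Fin n))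
      (⟨n - 1, by omega⟩ : Fin n)).subtype = Ψ) :
    Φ₁ = Φ₂ :=
  Representation.eq_of_comp_stabilizer_subtype_eq (by rw [Fintype.card_fin]; omega) hΨ h₁ h₂
end
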